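/- For every integer n ≥ 1, ∑_{j=1}^{n} H_{j,1}^2/j = (1/3)H_{n,1}^3 + ∑_{j=1}^{n} H_{j,1}/j^2 − (1/3)H_{n,3}. -/

import Mathlib

open Finset Filter Real Topology

/-- Generalized harmonic number `H (n, m) = ∑_{i=1}^{n} 1/i^m` as a real number. -/
noncomputable def H (n m : ℕ) : ℝ := ∑ i ∈ Finset.Icc 1 n, (1 : ℝ) / (i : ℝ) ^ m

/-- Apéry's constant `ζ(3) = ∑_{k=1}^{∞} 1/k³`. -/
noncomputable def zeta3 : ℝ := ∑' k : ℕ, 1 / ((k : ℝ) + 1) ^ 3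

/-!
With `a = H n 1` and `x = 1/(n+1)`, so that `H (n+1) 1 = a + x`, the last summand is
`(a + x)² x = ((a + x)³ - a³)/3 + (a + x) x² - x³/3`: a telescoping difference of cubes, the last
term of the second sum, and the last term of `H (n+1) 3`. Summing over `n` gives the identity.
-/

lemma H_succ (n m : ℕ) : H (n + 1) m = H n m + 1 / ((n : ℝ) + 1) ^ m := by
  rw [H, H, sum_Icc_succ_top (by omega)]
  push_cast
  ring

lemma add_one_div_sq_div_eq {R : Type*} [Field R] [CharZero R] (a y : R) :
    (a + 1 / y) ^ 2 / y =
      1 / 3 * ((a + 1 / y) ^ 3 - a ^ 3) + (a + 1 / y) / y ^ 2 - 1 / 3 * (1 / y ^ 3) := by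
  ring

theorem sum_H1_sq_div_general (n : ℕ) :
    ∑ j ∈ Finset.Icc 1 n, (H j 1) ^ 2 / (j : ℝ) =
      (1 / 3) * (H n 1) ^ 3 + (∑ j ∈ Finset.Icc 1 n, H j 1 / (j : ℝ) ^ 2)
        - (1 / 3) * H n 3 := by
  induction n with
  | zero => simp [H]
  | succ n ih =>
    have last_summand := add_one_div_sq_div_eq (H n 1) ((n : ℝ) + 1)
    rw [sum_Icc_succ_top (by omega), sum_Icc_succ_top (by omega), ih, H_succ n 1, H_succ n 3]
    push_cast
    linear_combination last_summand

theorem sum_H1_sq_div (n : ℕ) (hn : 1 ≤ n) :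
    ∑ j ∈ Finset.Icc 1 n, (H j 1) ^ 2 / (j : ℝ) =
      (1 / 3) * (H n 1) ^ 3 + (∑ j ∈ Finset.Icc 1 n, H j 1 / (j : ℝ) ^ 2)
        - (1 / 3) * H n 3 :=
  sum_H1_sq_div_general n
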